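/- Let Γ be a nonempty set, let X be a closed linear subspace of ℓ∞(Γ) (the space of bounded real-valued functions on Γ with the supremum norm), let Y be a real Banach space, let ε ≥ 0, and let f : X → Y be a standard ε-isometry. Then there exists a bounded linear operator S : Y → ℓ∞(Γ) with ‖S‖ ≤ 1 such that ‖S(f(x)) − x‖ ≤ 4ε for all x ∈ X. -/

import Mathlib

/-!
For `z` in `X`, a norm-one functional `ψ` norming `f z - f (-z)` satisfies
`‖z‖ - ‖z - x‖ - 3ε ≤ ψ (f x) ≤ ‖z + x‖ - ‖z‖ + 3ε` for all `x`. If the norm is differentiable at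
`u` with derivative `L`, both bounds tend to `L x ∓ 3ε` along `z = t • u`, `t → ∞`; since such `u`
are dense in finite dimension, `‖∑ aᵢ • xᵢ‖ ≤ ‖∑ aᵢ • f xᵢ‖ + 3ε ∑ |aᵢ|` follows. Hahn–Banach then
turns each coordinate functional `x ↦ x γ` of `ℓ∞(Γ)` into a functional `φ γ` of norm at most `1`
on `Y` with `|φ γ (f x) - x γ| ≤ 3ε`, and `S y = (φ γ y)_γ`.
-/

open scoped ENNReal ZeroAtInfty

noncomputable section

/-- `f : X → Y` is a *standard ε-isometry*: `f 0 = 0` and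
`|‖f x - f y‖ - ‖x - y‖| ≤ ε` for all `x, y`. -/
def StdEpsIsom {X Y : Type*} [NormedAddCommGroup X] [NormedAddCommGroup Y]
    (ε : ℝ) (f : X → Y) : Prop :=
  f 0 = 0 ∧ ∀ x y : X, |‖f x - f y‖ - ‖x - y‖| ≤ ε

/-- `L(f)`: the closed linear span of the range of `f` in `Y`. -/
def Lf {X Y : Type*} [NormedAddCommGroup Y] [NormedSpace ℝ Y] (f : X → Y) :
    Submodule ℝ Y :=
  (Submodule.span ℝ (Set.range f)).topologicalClosure

theorem mem_Lf {X Y : Type*} [NormedAddCommGroup Y] [NormedSpace ℝ Y] (f : X → Y) (x : X) :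
    f x ∈ Lf f :=
  Submodule.le_topologicalClosure _ (Submodule.subset_span ⟨x, rfl⟩)

/-- A standard ε-isometry `f` is *stable* if for some `α, γ > 0` there is a bounded linear
operator `T : L(f) → X` with `‖T‖ ≤ α` such that `‖T (f x) - x‖ ≤ γ ε` for all `x`. -/
def IsStable {X Y : Type*} [NormedAddCommGroup X] [NormedSpace ℝ X]
    [NormedAddCommGroup Y] [NormedSpace ℝ Y] (ε : ℝ) (f : X → Y) : Prop :=
  ∃ α γ : ℝ, 0 < α ∧ 0 < γ ∧
    ∃ T : Lf f →L[ℝ] X, ‖T‖ ≤ α ∧ ∀ x : X, ‖T ⟨f x, mem_Lf f x⟩ - x‖ ≤ γ * ε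

/-- The pair `(X, Y)` is *stable* if every standard ε-isometry `f : X → Y` (ε > 0) is stable. -/
def PairStable (X Y : Type*) [NormedAddCommGroup X] [NormedSpace ℝ X]
    [NormedAddCommGroup Y] [NormedSpace ℝ Y] : Prop :=
  ∀ ε : ℝ, 0 < ε → ∀ f : X → Y, StdEpsIsom ε f → IsStable ε f

open Filter Topology

theorem HasFDerivAt.tendsto_norm_smul_add_sub_norm_smul {E : Type*} [NormedAddCommGroup E]
    [NormedSpace ℝ E] {L : StrongDual ℝ E} {u : E} (h : HasFDerivAt (‖·‖) L u) (x : E) :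
    Tendsto (fun t : ℝ => ‖t • u + x‖ - ‖t • u‖) atTop (𝓝 (L x)) := by
  have hslope := (h.hasLineDerivAt x).tendsto_slope_zero_right.comp tendsto_inv_atTop_nhdsGT_zero
  refine hslope.congr' ?_
  filter_upwards [eventually_gt_atTop 0] with t ht
  have hu : t • u + x = t • (u + t⁻¹ • x) := by
    rw [smul_add, smul_smul, mul_inv_cancel₀ ht.ne', one_smul]
  simp only [Function.comp_apply, inv_inv, smul_eq_mul, hu, norm_smul, Real.norm_of_nonneg ht.le]
  ring

namespace Finsupp

variable {α : Type*}

def l1Norm (a : α →₀ ℝ) : ℝ := a.sum fun _ r => |r|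

theorem l1Norm_add_le (a b : α →₀ ℝ) : (a + b).l1Norm ≤ a.l1Norm + b.l1Norm := by
  classical
  have h₀ (i : α) : |(0 : ℝ)| = 0 := abs_zero
  rw [l1Norm, l1Norm, l1Norm, sum_of_support_subset _ support_add _ fun i _ => h₀ i,
    sum_of_support_subset _ Finset.subset_union_left _ fun i _ => h₀ i,
    sum_of_support_subset _ Finset.subset_union_right _ fun i _ => h₀ i, ← Finset.sum_add_distrib]
  exact Finset.sum_le_sum fun i _ => abs_add_le _ _

theorem l1Norm_smul (c : ℝ) (a : α →₀ ℝ) : (c • a).l1Norm = |c| * a.l1Norm := by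
  rw [l1Norm, l1Norm, sum_smul_index fun _ => abs_zero, sum, sum, Finset.mul_sum]
  simp only [abs_mul]

theorem l1Norm_neg (a : α →₀ ℝ) : (-a).l1Norm = a.l1Norm := by
  rw [← neg_one_smul ℝ a, l1Norm_smul, abs_neg, abs_one, one_mul]

theorem l1Norm_single (x : α) (r : ℝ) : (single x r).l1Norm = |r| :=
  sum_single_index abs_zero

end Finsupp

namespace StdEpsIsom

variable {X Y : Type*} [NormedAddCommGroup X] [NormedAddCommGroup Y] {ε : ℝ} {f : X → Y}

theorem nonneg (hf : StdEpsIsom ε f) : 0 ≤ ε := by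
  simpa using hf.2 0 0

theorem norm_sub_le (hf : StdEpsIsom ε f) (x y : X) : ‖f x - f y‖ ≤ ‖x - y‖ + ε := by
  linarith [(abs_le.mp (hf.2 x y)).2]

theorem le_norm_sub (hf : StdEpsIsom ε f) (x y : X) : ‖x - y‖ - ε ≤ ‖f x - f y‖ := by
  linarith [(abs_le.mp (hf.2 x y)).1]

theorem norm_le (hf : StdEpsIsom ε f) (x : X) : ‖f x‖ ≤ ‖x‖ + ε := by
  simpa [hf.1] using hf.norm_sub_le x 0

variable [NormedSpace ℝ X]

theorem comp_linearIsometry {E : Type*} [NormedAddCommGroup E] [NormedSpace ℝ E]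
    (hf : StdEpsIsom ε f) (g : E →ₗᵢ[ℝ] X) : StdEpsIsom ε (f ∘ g) :=
  ⟨by simp [hf.1], fun x y => by simpa [← map_sub] using hf.2 (g x) (g y)⟩

variable [NormedSpace ℝ Y]

theorem exists_dual_bounds (hf : StdEpsIsom ε f) (z : X) :
    ∃ ψ : StrongDual ℝ Y, ‖ψ‖ ≤ 1 ∧ ∀ x, ‖z‖ - ‖z - x‖ - 3 * ε ≤ ψ (f x) ∧
      ψ (f x) ≤ ‖z + x‖ - ‖z‖ + 3 * ε := by
  obtain ⟨ψ, hψ, hψv⟩ := exists_dual_vector'' ℝ (f z - f (-z))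
  have hψle (y : Y) : |ψ y| ≤ ‖y‖ := by
    simpa using ψ.le_of_opNorm_le hψ y
  have hv : 2 * ‖z‖ - ε ≤ ψ (f z) - ψ (f (-z)) := by
    have h := hf.le_norm_sub z (-z)
    rw [sub_neg_eq_add, ← two_smul ℝ z, norm_smul, Real.norm_two] at h
    rw [← map_sub, hψv]
    simpa using h
  have hz := abs_le.mp (hψle (f z))
  have hnz := abs_le.mp (hψle (f (-z)))
  have hfz := hf.norm_le z
  have hfnz : ‖f (-z)‖ ≤ ‖z‖ + ε := by simpa using hf.norm_le (-z)
  refine ⟨ψ, hψ, fun x => ⟨?_, ?_⟩⟩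
  · have h := (abs_le.mp (hψle (f z - f x))).2
    rw [map_sub] at h
    linarith [hf.norm_sub_le z x]
  · have h := (abs_le.mp (hψle (f x - f (-z)))).2
    rw [map_sub] at h
    have hx := hf.norm_sub_le x (-z)
    rw [sub_neg_eq_add, add_comm x z] at hx
    linarith

theorem norm_sum_smul_le_of_finiteDimensional [FiniteDimensional ℝ X] (hf : StdEpsIsom ε f)
    {ι : Type*} [Fintype ι] (a : ι → ℝ) (x : ι → X) :
    ‖∑ i, a i • x i‖ ≤ ‖∑ i, a i • f (x i)‖ + 3 * ε * ∑ i, |a i| := by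
  set c := ∑ i, a i • x i
  set T := ∑ i, |a i|
  refine le_of_forall_pos_le_add fun η hη => ?_
  set δ := η / (T + 3)
  have hδ : 0 < δ := by positivity
  have hδη : δ * (T + 3) = η := div_mul_cancel₀ η (by positivity)
  obtain ⟨u, hu : DifferentiableAt ℝ (‖·‖) u, hcu⟩ :=
    dense_differentiableAt_norm.exists_dist_lt c hδ
  set L := fderiv ℝ (‖·‖) u
  have hLle (w : X) : |L w| ≤ ‖w‖ := by
    simpa using L.le_of_opNorm_le (norm_fderiv_le_of_lipschitz ℝ lipschitzWith_one_norm) w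
  have hLc : ‖c‖ - 2 * δ ≤ L c := by
    have h := (abs_le.mp (hLle (u - c))).2
    rw [map_sub, hu.fderiv_norm_self] at h
    rw [dist_eq_norm'] at hcu
    linarith [norm_sub_norm_le c u, norm_sub_rev c u]
  have hray (i : ι) : ∀ᶠ t : ℝ in atTop, |‖t • u + x i‖ - ‖t • u‖ - L (x i)| < δ ∧
      |‖t • u - x i‖ - ‖t • u‖ + L (x i)| < δ := by
    have hd := hu.hasFDerivAt.tendsto_norm_smul_add_sub_norm_smul
    refine ((Metric.tendsto_nhds.mp (hd (x i)) δ hδ).and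
      (Metric.tendsto_nhds.mp (hd (-x i)) δ hδ)).mono fun t ht => ?_
    simpa [Real.dist_eq, sub_eq_add_neg] using ht
  obtain ⟨t, ht⟩ := (eventually_all.mpr hray).exists
  obtain ⟨ψ, hψ, hψf⟩ := hf.exists_dual_bounds (t • u)
  have hclose (i : ι) : |ψ (f (x i)) - L (x i)| ≤ 3 * ε + δ := by
    have h₁ := abs_lt.mp (ht i).1
    have h₂ := abs_lt.mp (ht i).2
    have h₃ := hψf (x i)
    exact abs_le.mpr ⟨by linarith, by linarith⟩
  have hsum : |ψ (∑ i, a i • f (x i)) - L c| ≤ (3 * ε + δ) * T := by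
    rw [map_sum, map_sum, ← Finset.sum_sub_distrib, Finset.mul_sum]
    refine (Finset.abs_sum_le_sum_abs _ _).trans (Finset.sum_le_sum fun i _ => ?_)
    rw [map_smul, map_smul, smul_eq_mul, smul_eq_mul, ← mul_sub, abs_mul, mul_comm]
    exact mul_le_mul_of_nonneg_right (hclose i) (abs_nonneg _)
  have hψV : ψ (∑ i, a i • f (x i)) ≤ ‖∑ i, a i • f (x i)‖ :=
    (le_abs_self _).trans
      (by simpa only [one_mul, Real.norm_eq_abs] using ψ.le_of_opNorm_le hψ (∑ i, a i • f (x i)))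
  linarith [(abs_le.mp hsum).1]

theorem norm_linearCombination_le (hf : StdEpsIsom ε f) (a : X →₀ ℝ) :
    ‖Finsupp.linearCombination ℝ id a‖ ≤
      ‖Finsupp.linearCombination ℝ f a‖ + 3 * ε * a.l1Norm := by
  let W := Submodule.span ℝ (a.support : Set X)
  have key := (hf.comp_linearIsometry W.subtypeₗᵢ).norm_sum_smul_le_of_finiteDimensional
    (fun i : a.support => a i) (fun i => ⟨i, Submodule.subset_span i.2⟩)
  simp only [Finsupp.linearCombination_apply, Finsupp.sum, Finsupp.l1Norm,
    ← Finset.sum_coe_sort a.support]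
  refine le_of_eq_of_le ?_ key
  rw [← Submodule.norm_coe, Submodule.coe_sum]
  simp

/-- `Φ` extends `x' (∑ b_x • x)` from the pairs `(∑ b_x • f x, b)` under the bound
`‖y‖ + 3ε ‖b‖₁`, so `φ = Φ (·, 0)` satisfies `φ (f x) = x' x - Φ (0, single x 1)`. -/
theorem exists_dual_abs_sub_le (hf : StdEpsIsom ε f) (x' : StrongDual ℝ X) (hx' : ‖x'‖ ≤ 1) :
    ∃ φ : StrongDual ℝ Y, ‖φ‖ ≤ 1 ∧ ∀ x, |φ (f x) - x' x| ≤ 3 * ε := by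
  let Ψ : (X →₀ ℝ) →ₗ[ℝ] Y × (X →₀ ℝ) := (Finsupp.linearCombination ℝ f).prod LinearMap.id
  let N : Y × (X →₀ ℝ) → ℝ := fun p => ‖p.1‖ + 3 * ε * p.2.l1Norm
  let Λ : Y × (X →₀ ℝ) →ₗ.[ℝ] ℝ :=
    ⟨LinearMap.range Ψ, (x'.toLinearMap ∘ₗ Finsupp.linearCombination ℝ id ∘ₗ LinearMap.snd ℝ Y _) ∘ₗ
      (LinearMap.range Ψ).subtype⟩
  have hΛN (m : Λ.domain) : Λ m ≤ N m := by
    obtain ⟨_, a, rfl⟩ := m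
    have h := (abs_le.mp
      (by simpa using x'.le_of_opNorm_le hx' (Finsupp.linearCombination ℝ id a))).2
    simpa [Λ, N, Ψ] using h.trans (hf.norm_linearCombination_le a)
  obtain ⟨Φ, hΦΛ, hΦN⟩ := exists_extension_of_le_sublinear Λ N
    (fun c hc p => by
      simp only [N, Prod.smul_fst, Prod.smul_snd, norm_smul, Finsupp.l1Norm_smul,
        Real.norm_of_nonneg hc.le, abs_of_pos hc]
      ring)
    (fun p q => by
      have := Finsupp.l1Norm_add_le p.2 q.2
      simp only [N, Prod.fst_add, Prod.snd_add]
      nlinarith [norm_add_le p.1 q.1, hf.nonneg])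
    hΛN
  have hΦN_abs (p : Y × (X →₀ ℝ)) : |Φ p| ≤ N p := by
    have h := hΦN (-p)
    simp only [N, map_neg, Prod.fst_neg, Prod.snd_neg, norm_neg, Finsupp.l1Norm_neg] at h
    exact abs_le.mpr ⟨by linarith, hΦN p⟩
  have hΦY (y : Y) : |Φ (y, 0)| ≤ ‖y‖ := by
    simpa [N, Finsupp.l1Norm] using hΦN_abs (y, 0)
  have hΦe (x : X) : |Φ (0, Finsupp.single x 1)| ≤ 3 * ε := by
    simpa [N, Finsupp.l1Norm_single] using hΦN_abs (0, Finsupp.single x 1)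
  have hΦf (x : X) : Φ (f x, Finsupp.single x 1) = x' x := by
    simpa [Λ, Ψ] using hΦΛ ⟨Ψ (Finsupp.single x 1), Finsupp.single x 1, rfl⟩
  let φ := (Φ ∘ₗ LinearMap.inl ℝ Y (X →₀ ℝ)).mkContinuous 1 fun y => by simpa using hΦY y
  refine ⟨φ, LinearMap.mkContinuous_norm_le _ zero_le_one _, fun x => ?_⟩
  have hφ : φ (f x) = Φ (f x, Finsupp.single x 1) - Φ (0, Finsupp.single x 1) := by
    rw [← map_sub, Prod.mk_sub_mk, sub_zero, sub_self]
    rfl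
  rw [hφ, hΦf, sub_sub_cancel_left, abs_neg]
  exact hΦe x

end StdEpsIsom

theorem exists_clm_lp_infty_of_norm_le {Γ Y : Type*} [NormedAddCommGroup Y] [NormedSpace ℝ Y]
    (φ : Γ → StrongDual ℝ Y) {C : ℝ} (hC : 0 ≤ C) (hφ : ∀ γ, ‖φ γ‖ ≤ C) :
    ∃ S : Y →L[ℝ] lp (fun _ : Γ => ℝ) ∞, ‖S‖ ≤ C ∧ ∀ y γ, S y γ = φ γ y := by
  have hφy (y : Y) (γ : Γ) : ‖φ γ y‖ ≤ C * ‖y‖ := (φ γ).le_of_opNorm_le (hφ γ) y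
  let S : Y →ₗ[ℝ] lp (fun _ : Γ => ℝ) ∞ :=
    { toFun := fun y => ⟨fun γ => φ γ y, memℓp_infty ⟨C * ‖y‖, by
        rintro _ ⟨γ, rfl⟩
        exact hφy y γ⟩⟩
      map_add' := fun y z => by ext γ; exact map_add (φ γ) y z
      map_smul' := fun c y => by ext γ; exact map_smul (φ γ) c y }
  exact ⟨S.mkContinuous C fun y => lp.norm_le_of_forall_le (by positivity) (hφy y),
    LinearMap.mkContinuous_norm_le _ hC _, fun y γ => rfl⟩

universe u v

theorem stmt12_general {Γ : Type u} {Y : Type v} [NormedAddCommGroup Y] [NormedSpace ℝ Y]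
    (X : Submodule ℝ (lp (fun _ : Γ => ℝ) ∞))
    (ε : ℝ) (f : X → Y) (hf : StdEpsIsom ε f) :
    ∃ S : Y →L[ℝ] lp (fun _ : Γ => ℝ) ∞, ‖S‖ ≤ 1 ∧
      ∀ x : X, ‖S (f x) - (x : lp (fun _ : Γ => ℝ) ∞)‖ ≤ 4 * ε := by
  let coord (γ : Γ) : StrongDual ℝ X := (lp.evalCLM ℝ (fun _ : Γ => ℝ) ∞ γ).comp X.subtypeL
  have hcoord_apply (γ : Γ) (x : X) : coord γ x = (x : lp (fun _ : Γ => ℝ) ∞) γ := rfl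
  have hcoord (γ : Γ) : ‖coord γ‖ ≤ 1 :=
    ContinuousLinearMap.opNorm_le_bound _ zero_le_one fun x => by
      simpa [hcoord_apply] using
        lp.norm_apply_le_norm ENNReal.top_ne_zero (x : lp (fun _ : Γ => ℝ) ∞) γ
  choose φ hφ hφf using fun γ => hf.exists_dual_abs_sub_le (coord γ) (hcoord γ)
  obtain ⟨S, hS, hSφ⟩ := exists_clm_lp_infty_of_norm_le φ zero_le_one hφ
  refine ⟨S, hS, fun x => lp.norm_le_of_forall_le (by linarith [hf.nonneg]) fun γ => ?_⟩
  have h := hφf γ x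
  rw [hcoord_apply] at h
  simp only [lp.coeFn_sub, Pi.sub_apply, hSφ, Real.norm_eq_abs]
  linarith [hf.nonneg]

/-- If `X` is a closed subspace of `ℓ∞(Γ)` and `f : X → Y` is a standard ε-isometry, then
there is a bounded linear operator `S : Y → ℓ∞(Γ)` with `‖S‖ ≤ 1` and
`‖S (f x) - x‖ ≤ 4 ε` for all `x ∈ X`. -/
theorem stmt12 {Γ : Type u} [Nonempty Γ]
    {Y : Type v} [NormedAddCommGroup Y] [NormedSpace ℝ Y] [CompleteSpace Y]
    (X : Submodule ℝ (lp (fun _ : Γ => ℝ) ∞)) (hXc : IsClosed (X : Set (lp (fun _ : Γ => ℝ) ∞)))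
    (ε : ℝ) (hε : 0 ≤ ε) (f : X → Y) (hf : StdEpsIsom ε f) :
    ∃ S : Y →L[ℝ] lp (fun _ : Γ => ℝ) ∞, ‖S‖ ≤ 1 ∧
      ∀ x : X, ‖S (f x) - (x : lp (fun _ : Γ => ℝ) ∞)‖ ≤ 4 * ε :=
  stmt12_general X ε f hf
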